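/- arXiv:2205.04866 — 2 statements merged into one kernel-verified Lean document; each statement's English description precedes it below -/
import Mathlib

section
/- The polyform inner product on S = ⋀ℂⁿ is invariant under the spin Lie algebra: for every real antisymmetric 2n×2n matrix X, setting A(X) := (1/8) Σ_{A,B} X^{AB} Γ_A Γ_B, one has ⟨A(X) ψ₁, ψ₂⟩ + ⟨ψ₁, A(X) ψ₂⟩ = 0 for all ψ₁, ψ₂ ∈ S. -/
/-- The space of polyforms (spinors): the exterior algebra of `ℂⁿ`. -/
noncomputable abbrev Polyform (n : ℕ) := ExteriorAlgebra ℂ (Fin n → ℂ)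

/-- The creation operator `a_i`: wedging with the basis one-form `e_i`. -/
noncomputable def crea (n : ℕ) (i : Fin n) : Module.End ℂ (Polyform n) :=
  LinearMap.mulLeft ℂ (ExteriorAlgebra.ι ℂ (Pi.single i 1))

/-- The annihilation operator `a_i†`: interior product (left contraction) with the
`i`-th dual basis vector. -/
noncomputable def anni (n : ℕ) (i : Fin n) : Module.End ℂ (Polyform n) :=
  CliffordAlgebra.contractLeft (Q := (0 : QuadraticForm ℂ (Fin n → ℂ))) (LinearMap.proj i)

/-- The gamma operators: `Γ_i = a_i + a_i†` and `Γ_{i+n} = I•(a_i − a_i†)` (0-indexed). -/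
noncomputable def Gam (n : ℕ) (A : Fin (2 * n)) : Module.End ℂ (Polyform n) :=
  if h : (A : ℕ) < n then crea n ⟨A, h⟩ + anni n ⟨A, h⟩
  else Complex.I • (crea n ⟨(A : ℕ) - n, by have := A.isLt; omega⟩
    - anni n ⟨(A : ℕ) - n, by have := A.isLt; omega⟩)

/-- The linear functional extracting the coefficient of the top form `e₁ ∧ ⋯ ∧ e_n`
of a polyform. -/
noncomputable def topCoeff (n : ℕ) : Polyform n →ₗ[ℂ] ℂ :=
  ExteriorAlgebra.liftAlternating
    (fun k => if h : k = n
      then AlternatingMap.domDomCongr (finCongr h.symm) (Pi.basisFun ℂ (Fin n)).det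
      else 0)

/-- The polyform inner product `⟨ψ₁, ψ₂⟩`: the coefficient of the top form in
`σ(ψ₁) ∧ ψ₂`, where `σ` is the reversal anti-automorphism. -/
noncomputable def polyIP (n : ℕ) (ψ₁ ψ₂ : Polyform n) : ℂ :=
  topCoeff n (CliffordAlgebra.reverse (Q := (0 : QuadraticForm ℂ (Fin n → ℂ))) ψ₁ * ψ₂)

/-- The spin generator `A(X) := (1/8) Σ_{A,B} X^{AB} Γ_A Γ_B`. -/
noncomputable def spinGen (n : ℕ) (X : Matrix (Fin (2 * n)) (Fin (2 * n)) ℝ) :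
    Module.End ℂ (Polyform n) :=
  (8 : ℂ)⁻¹ • ∑ A, ∑ B, (X A B : ℂ) • (Gam n A * Gam n B)

/-!
Every `Γ_A` is symmetric for the pairing `⟨·, ·⟩`, so `Γ_A Γ_B` has adjoint `Γ_B Γ_A`
and `A(X)` has adjoint `A(Xᵀ) = -A(X)`.
For the creation part of `Γ_A` symmetry is the identity `σ(e ∧ ψ) = σ(ψ) ∧ e`. For the
annihilation part: contraction lowers the degree by one and `⋀ⁿ⁺¹ℂⁿ = 0`, so the top
coefficient of a contraction vanishes. Since `σ` turns a left contraction into a right one,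
an induction on the left factor, peeling off one vector at a time, moves the contraction
across the pairing.
-/
namespace CliffordAlgebra

variable {R M N : Type*} [CommRing R] [AddCommGroup M] [Module R M] [AddCommGroup N] [Module R N]
  {Q : QuadraticForm R M}

theorem map_contractRight_mul_eq_map_mul_contractLeft (φ : CliffordAlgebra Q →ₗ[R] N)
    (d : Module.Dual R M) (hφ : ∀ x, φ (contractLeft d x) = 0) (a b : CliffordAlgebra Q) :
    φ (contractRight a d * b) = φ (a * contractLeft d b) := by
  induction a using right_induction generalizing b with
  | algebraMap r =>
    rw [contractRight_algebraMap, zero_mul, map_zero, Algebra.algebraMap_eq_smul_one,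
      smul_mul_assoc, one_mul, map_smul, hφ, smul_zero]
  | add x y hx hy => rw [map_add, LinearMap.add_apply, add_mul, add_mul, map_add, map_add, hx, hy]
  | mul_ι m x hx =>
    rw [contractRight_mul_ι, sub_mul, mul_assoc, map_sub, hx, contractLeft_ι_mul, mul_sub,
      map_sub, smul_mul_assoc, mul_smul_comm, mul_assoc, sub_sub_cancel]

end CliffordAlgebra

namespace ExteriorAlgebra

theorem contractLeft_ιMulti_succ_mem_exteriorPower {R M : Type*} [CommRing R] [AddCommGroup M]
    [Module R M] (d : Module.Dual R M) {k : ℕ} (v : Fin (k + 1) → M) :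
    CliffordAlgebra.contractLeft (Q := 0) d (ιMulti R (k + 1) v) ∈ ⋀[R]^k M := by
  induction k with
  | zero =>
    rw [ιMulti_succ_apply, CliffordAlgebra.contractLeft_ι_mul]
    refine sub_mem (Submodule.smul_mem _ _ (ιMulti_range R _ ⟨_, rfl⟩)) ?_
    rw [ιMulti_zero_apply, CliffordAlgebra.contractLeft_one, mul_zero]
    exact zero_mem _
  | succ k ih =>
    rw [ιMulti_succ_apply, CliffordAlgebra.contractLeft_ι_mul]
    refine sub_mem (Submodule.smul_mem _ _ (ιMulti_range R _ ⟨_, rfl⟩)) ?_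
    rw [exteriorPower, pow_succ']
    exact Submodule.mul_mem_mul (LinearMap.mem_range_self _ _) (ih _)

theorem ιMulti_eq_zero_of_finrank_lt {K M : Type*} [Field K] [AddCommGroup M] [Module K M]
    [Module.Finite K M] {k : ℕ} (hk : Module.finrank K M < k) (v : Fin k → M) :
    ιMulti K k v = 0 :=
  AlternatingMap.map_linearDependent _ _ fun hv => by
    have := hv.fintype_card_le_finrank
    rw [Fintype.card_fin] at this
    omega

end ExteriorAlgebra

theorem LinearMap.isAdjointPair_sum {R M ι : Type*} [CommSemiring R] [AddCommMonoid M]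
    [Module R M] {B : LinearMap.BilinForm R M} (s : Finset ι) {f g : ι → Module.End R M}
    (h : ∀ i ∈ s, LinearMap.IsAdjointPair B B (f i) (g i)) :
    LinearMap.IsAdjointPair B B ⇑(∑ i ∈ s, f i) ⇑(∑ i ∈ s, g i) := by
  classical
  induction s using Finset.induction_on with
  | empty => exact LinearMap.isAdjointPair_zero
  | insert i s hi ih =>
    rw [Finset.sum_insert hi, Finset.sum_insert hi]
    exact (h i (Finset.mem_insert_self i s)).add (ih fun j hj => h j (Finset.mem_insert_of_mem hj))

section Polyform

open ExteriorAlgebra LinearMap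

variable {n : ℕ}

theorem topCoeff_eq_zero_of_mem_exteriorPower {k : ℕ} (hk : k ≠ n) {x : Polyform n}
    (hx : x ∈ ⋀[ℂ]^k (Fin n → ℂ)) : topCoeff n x = 0 := by
  suffices ⋀[ℂ]^k (Fin n → ℂ) ≤ ker (topCoeff n) from this hx
  rw [← ιMulti_span_fixedDegree, Submodule.span_le]
  rintro _ ⟨v, rfl⟩
  rw [SetLike.mem_coe, mem_ker, topCoeff, liftAlternating_apply_ιMulti, dif_neg hk,
    AlternatingMap.zero_apply]

theorem topCoeff_contractLeft (d : Module.Dual ℂ (Fin n → ℂ)) (x : Polyform n) :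
    topCoeff n (CliffordAlgebra.contractLeft (Q := 0) d x) = 0 := by
  have hx : x ∈ Submodule.span ℂ
      (Set.range fun p : Σ k, Fin k → Fin n → ℂ => ιMulti ℂ p.1 p.2) :=
    ιMulti_span ℂ (Fin n → ℂ) ▸ Submodule.mem_top
  induction hx using Submodule.span_induction with
  | mem _ hx =>
    obtain ⟨⟨k, v⟩, rfl⟩ := hx
    dsimp only
    cases k with
    | zero => rw [ιMulti_zero_apply, CliffordAlgebra.contractLeft_one, map_zero]
    | succ k =>
      obtain rfl | hk := eq_or_ne k n
      · rw [ιMulti_eq_zero_of_finrank_lt (K := ℂ) (by simp) v, map_zero, map_zero]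
      · exact topCoeff_eq_zero_of_mem_exteriorPower hk
          (contractLeft_ιMulti_succ_mem_exteriorPower d v)
  | zero => rw [map_zero, map_zero]
  | add x y _ _ hx hy => rw [map_add, map_add, hx, hy, add_zero]
  | smul c x _ hx => rw [map_smul, map_smul, hx, smul_zero]

noncomputable def polyForm (n : ℕ) : LinearMap.BilinForm ℂ (Polyform n) :=
  (LinearMap.mul ℂ (Polyform n)).compr₂ (topCoeff n) ∘ₗ CliffordAlgebra.reverse (Q := 0)

theorem polyForm_apply (x y : Polyform n) : polyForm n x y = polyIP n x y := rfl

theorem isAdjointPair_crea (i : Fin n) :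
    IsAdjointPair (polyForm n) (polyForm n) (crea n i) (crea n i) := fun x y => by
  rw [polyForm_apply, polyForm_apply, polyIP, polyIP, crea, mulLeft_apply, mulLeft_apply,
    CliffordAlgebra.reverse.map_mul, CliffordAlgebra.reverse_ι, mul_assoc]

theorem isAdjointPair_anni (i : Fin n) :
    IsAdjointPair (polyForm n) (polyForm n) (anni n i) (anni n i) := fun x y => by
  rw [polyForm_apply, polyForm_apply, polyIP, polyIP, anni, ← CliffordAlgebra.reverse_reverse x,
    ← CliffordAlgebra.contractRight_eq, CliffordAlgebra.reverse_reverse]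
  exact CliffordAlgebra.map_contractRight_mul_eq_map_mul_contractLeft _ _
    (topCoeff_contractLeft _) _ _

theorem isAdjointPair_Gam (A : Fin (2 * n)) :
    IsAdjointPair (polyForm n) (polyForm n) (Gam n A) (Gam n A) := by
  unfold Gam
  split_ifs
  · exact (isAdjointPair_crea _).add (isAdjointPair_anni _)
  · exact ((isAdjointPair_crea _).sub (isAdjointPair_anni _)).smul _

theorem isAdjointPair_spinGen (X : Matrix (Fin (2 * n)) (Fin (2 * n)) ℝ) :
    IsAdjointPair (polyForm n) (polyForm n) (spinGen n X) (spinGen n X.transpose) := by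
  have h : IsAdjointPair (polyForm n) (polyForm n) (spinGen n X)
      ((8 : ℂ)⁻¹ • ∑ A, ∑ B, (X A B : ℂ) • (Gam n B * Gam n A)) := by
    refine IsAdjointPair.smul _ (isAdjointPair_sum _ fun A _ => isAdjointPair_sum _ fun B _ => ?_)
    exact ((isAdjointPair_Gam A).mul (isAdjointPair_Gam B)).smul _
  rwa [Finset.sum_comm] at h

theorem spinGen_neg (X : Matrix (Fin (2 * n)) (Fin (2 * n)) ℝ) :
    spinGen n (-X) = -spinGen n X := by
  refine LinearMap.ext fun ψ => ?_
  simp only [spinGen, Matrix.neg_apply, Complex.ofReal_neg, LinearMap.smul_apply, coe_sum,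
    coe_smul, neg_smul, Finset.sum_neg_distrib, Finset.sum_apply, Pi.neg_apply, smul_neg,
    LinearMap.neg_apply]

end Polyform

open Matrix in
theorem polyIP_spin_invariant_general (n : ℕ)
    (X : Matrix (Fin (2 * n)) (Fin (2 * n)) ℝ) (hX : Xᵀ = -X) (ψ₁ ψ₂ : Polyform n) :
    polyIP n (spinGen n X ψ₁) ψ₂ + polyIP n ψ₁ (spinGen n X ψ₂) = 0 := by
  rw [← polyForm_apply, isAdjointPair_spinGen X ψ₁ ψ₂, hX, spinGen_neg, LinearMap.neg_apply,
    map_neg, polyForm_apply, neg_add_cancel]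

open Matrix in
/-- The polyform inner product is invariant under the spin Lie algebra:
`⟨A(X)ψ₁, ψ₂⟩ + ⟨ψ₁, A(X)ψ₂⟩ = 0` for every real antisymmetric matrix `X`. -/
theorem polyIP_spin_invariant (n : ℕ) (hn : 1 ≤ n)
    (X : Matrix (Fin (2 * n)) (Fin (2 * n)) ℝ) (hX : Xᵀ = -X) (ψ₁ ψ₂ : Polyform n) :
    polyIP n (spinGen n X ψ₁) ψ₂ + polyIP n ψ₁ (spinGen n X ψ₂) = 0 :=
  polyIP_spin_invariant_general n X hX ψ₁ ψ₂
end

section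
/- In the polyform model of Cl(2n) on S = ⋀ℂⁿ, the antilinear operators R := Γ₁ ∘ … ∘ Γ_n ∘ ∗ and R' := Γ_{n+1} ∘ … ∘ Γ_{2n} ∘ ∗ satisfy R² = (−1)^{n(n−1)/2} · id_S and (R')² = (−1)^{n(n+1)/2} · id_S. -/
/-- The basis polyform `e_{i₁} ∧ ⋯ ∧ e_{i_k}` indexed by a list of indices. -/
noncomputable def basisMonomial (n : ℕ) (l : List (Fin n)) : Polyform n :=
  (l.map fun i => ExteriorAlgebra.ι ℂ (Pi.single i (1 : ℂ))).prod

/-- `st` is the complex conjugation `∗` on polyforms: the `ℂ`-antilinear involution fixing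
each basis polyform and conjugating the complex coefficients. -/
def IsConjugation (n : ℕ) (st : Polyform n → Polyform n) : Prop :=
  (∀ x y, st (x + y) = st x + st y) ∧
  (∀ (z : ℂ) (x : Polyform n), st (z • x) = (starRingEnd ℂ) z • st x) ∧
  (∀ l : List (Fin n), st (basisMonomial n l) = basisMonomial n l)

/-- The antilinear operator `R := Γ₁ ∘ ⋯ ∘ Γ_n ∘ ∗`. -/
noncomputable def Rop (n : ℕ) (st : Polyform n → Polyform n) : Polyform n → Polyform n :=
  fun ψ => (((List.finRange n).map fun i => Gam n (Fin.castLE (by omega) i)).prod) (st ψ)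

/-- The antilinear operator `R' := Γ_{n+1} ∘ ⋯ ∘ Γ_{2n} ∘ ∗`. -/
noncomputable def Rop' (n : ℕ) (st : Polyform n → Polyform n) : Polyform n → Polyform n :=
  fun ψ =>
    (((List.finRange n).map fun i => Gam n ⟨n + i.1, by have := i.2; omega⟩).prod) (st ψ)

section AnticommutingProduct

variable {ι R : Type*} [Ring R] {f : ι → R}

theorem List.prod_map_mul_eq_neg_one_pow_mul (hanti : ∀ i j, i ≠ j → f i * f j = -(f j * f i))
    {l : List ι} {b : ι} (hb : b ∉ l) :
    (l.map f).prod * f b = (-1) ^ l.length * (f b * (l.map f).prod) := by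
  induction l with
  | nil => simp
  | cons a l ih =>
    obtain ⟨hba, hbl⟩ := List.ne_and_not_mem_of_not_mem_cons hb
    rw [List.map_cons, List.prod_cons, List.length_cons, mul_assoc, ih hbl, ← mul_assoc (f a),
      ← ((Commute.neg_one_left (f a)).pow_left _).eq, mul_assoc, ← mul_assoc (f a),
      hanti a b (Ne.symm hba), pow_succ]
    simp only [neg_mul, mul_neg, mul_one, mul_assoc]

theorem List.prod_map_mul_self_of_anticomm (hsq : ∀ i, f i * f i = 1)
    (hanti : ∀ i j, i ≠ j → f i * f j = -(f j * f i)) {l : List ι} (hl : l.Nodup) :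
    (l.map f).prod * (l.map f).prod = (-1) ^ l.length.choose 2 := by
  induction l with
  | nil => simp
  | cons b l ih =>
    obtain ⟨hbl, hl⟩ := List.nodup_cons.mp hl
    calc (f b * (l.map f).prod) * (f b * (l.map f).prod)
        = f b * ((l.map f).prod * f b) * (l.map f).prod := by noncomm_ring
      _ = (-1) ^ l.length * (f b * f b) * ((l.map f).prod * (l.map f).prod) := by
        rw [List.prod_map_mul_eq_neg_one_pow_mul hanti hbl, ← mul_assoc (f b),
          ← ((Commute.neg_one_left (f b)).pow_left _).eq]
        simp only [mul_assoc]
      _ = (-1) ^ (l.length + 1).choose 2 := by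
        rw [hsq, ih hl, mul_one, ← pow_add, Nat.choose_succ_succ', Nat.choose_one_right]

end AnticommutingProduct

theorem list_prod_apply_eq_pow_smul {M : Type*} [AddCommGroup M] [Module ℂ M] {g : M → M}
    {c : ℂ} {l : List (Module.End ℂ M)} (hl : ∀ T ∈ l, ∀ x, g (T x) = c • T (g x)) (x : M) :
    g (l.prod x) = c ^ l.length • l.prod (g x) := by
  induction l generalizing x with
  | nil => simp
  | cons T l ih =>
    rw [List.prod_cons, Module.End.mul_apply, Module.End.mul_apply, List.length_cons,
      hl T List.mem_cons_self, ih (fun S hS => hl S (List.mem_cons_of_mem T hS)), map_smul,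
      smul_smul, pow_succ']

theorem Module.End.neg_one_pow_apply {R M : Type*} [CommRing R] [AddCommGroup M] [Module R M]
    (k : ℕ) (x : M) : ((-1 : Module.End R M) ^ k) x = (-1 : R) ^ k • x := by
  rw [← map_one (algebraMap R (Module.End R M)), ← map_neg, ← map_pow,
    Module.algebraMap_end_apply]

section Polyform

variable {n : ℕ}

section CanonicalAnticommutation

theorem crea_apply (i : Fin n) (x : Polyform n) :
    crea n i x = ExteriorAlgebra.ι ℂ (Pi.single i 1) * x := rfl

theorem crea_mul_self (i : Fin n) : crea n i * crea n i = 0 := by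
  refine LinearMap.ext fun x => ?_
  rw [Module.End.mul_apply, crea_apply, crea_apply, ← mul_assoc, ExteriorAlgebra.ι_sq_zero,
    zero_mul, LinearMap.zero_apply]

theorem anni_mul_self (i : Fin n) : anni n i * anni n i = 0 :=
  LinearMap.ext fun _ => CliffordAlgebra.contractLeft_contractLeft _ _

theorem crea_mul_add_mul_crea (i j : Fin n) : crea n i * crea n j + crea n j * crea n i = 0 := by
  refine LinearMap.ext fun x => ?_
  simp only [LinearMap.add_apply, Module.End.mul_apply, crea_apply, ← mul_assoc, ← add_mul,
    ExteriorAlgebra.ι_add_mul_swap, zero_mul, LinearMap.zero_apply]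

theorem anni_mul_add_mul_anni (i j : Fin n) : anni n i * anni n j + anni n j * anni n i = 0 :=
  LinearMap.ext fun _ => by
    rw [LinearMap.add_apply, Module.End.mul_apply, Module.End.mul_apply, anni, anni,
      CliffordAlgebra.contractLeft_comm, neg_add_cancel, LinearMap.zero_apply]

theorem anni_crea_apply (i j : Fin n) (x : Polyform n) :
    anni n i (crea n j x) = (if i = j then x else 0) - crea n j (anni n i x) := by
  rw [crea_apply, anni, CliffordAlgebra.contractLeft_ι_mul, LinearMap.proj_apply,
    Pi.single_apply, ite_smul, one_smul, zero_smul]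
  rfl

theorem anni_mul_add_mul_anni_crea (i j : Fin n) :
    anni n i * crea n j + crea n j * anni n i = if i = j then 1 else 0 := by
  refine LinearMap.ext fun x => ?_
  rw [LinearMap.add_apply, Module.End.mul_apply, Module.End.mul_apply, anni_crea_apply,
    sub_add_cancel]
  split_ifs <;> rfl

theorem crea_add_smul_anni_mul_self (z : ℂ) (i : Fin n) :
    (crea n i + z • anni n i) * (crea n i + z • anni n i) = z • 1 := by
  have hac := anni_mul_add_mul_anni_crea i i
  rw [if_pos rfl] at hac
  calc (crea n i + z • anni n i) * (crea n i + z • anni n i)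
      = crea n i * crea n i + z • (anni n i * crea n i + crea n i * anni n i)
        + (z * z) • (anni n i * anni n i) := by
        simp only [mul_add, add_mul, mul_smul_comm, smul_mul_assoc, smul_smul, smul_add]; abel
    _ = z • 1 := by rw [crea_mul_self, hac, anni_mul_self, smul_zero, zero_add, add_zero]

theorem crea_add_smul_anni_anticomm (z : ℂ) {i j : Fin n} (hij : i ≠ j) :
    (crea n i + z • anni n i) * (crea n j + z • anni n j)
      = -((crea n j + z • anni n j) * (crea n i + z • anni n i)) := by
  refine eq_neg_of_add_eq_zero_left ?_
  calc (crea n i + z • anni n i) * (crea n j + z • anni n j)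
        + (crea n j + z • anni n j) * (crea n i + z • anni n i)
      = (crea n i * crea n j + crea n j * crea n i)
        + z • ((anni n i * crea n j + crea n j * anni n i)
          + (anni n j * crea n i + crea n i * anni n j))
        + (z * z) • (anni n i * anni n j + anni n j * anni n i) := by
        simp only [mul_add, add_mul, mul_smul_comm, smul_mul_assoc, smul_smul, smul_add]; abel
    _ = 0 := by
      rw [crea_mul_add_mul_crea, anni_mul_add_mul_anni_crea, anni_mul_add_mul_anni_crea,
        if_neg hij, if_neg hij.symm, anni_mul_add_mul_anni]
      simp

end CanonicalAnticommutation

section Gamma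

theorem Gam_castLE (h : n ≤ 2 * n) (i : Fin n) : Gam n (Fin.castLE h i) = crea n i + anni n i :=
  dif_pos i.isLt

theorem Gam_add_self (i : Fin n) (h : n + i < 2 * n) :
    Gam n ⟨n + i, h⟩ = Complex.I • (crea n i - anni n i) := by
  rw [Gam, dif_neg (Nat.not_lt.mpr (Nat.le_add_right n i))]
  simp only [Nat.add_sub_cancel_left]

theorem prod_Gam_castLE_mul_self (h : n ≤ 2 * n) :
    ((List.finRange n).map fun i => Gam n (Fin.castLE h i)).prod
      * ((List.finRange n).map fun i => Gam n (Fin.castLE h i)).prod = (-1) ^ n.choose 2 := by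
  have hX (i : Fin n) : Gam n (Fin.castLE h i) = crea n i + (1 : ℂ) • anni n i := by
    rw [Gam_castLE, one_smul]
  simpa using List.prod_map_mul_self_of_anticomm
    (fun i => by rw [hX, crea_add_smul_anni_mul_self, one_smul])
    (fun i j hij => by rw [hX, hX, crea_add_smul_anni_anticomm 1 hij]) (List.nodup_finRange n)

theorem prod_Gam_add_self_mul_self :
    ((List.finRange n).map fun i => Gam n ⟨n + i.1, by have := i.2; omega⟩).prod
      * ((List.finRange n).map fun i => Gam n ⟨n + i.1, by have := i.2; omega⟩).prod
      = (-1) ^ n.choose 2 := by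
  have hX (i : Fin n) : Gam n ⟨n + i.1, by have := i.2; omega⟩
      = Complex.I • (crea n i + (-1 : ℂ) • anni n i) := by
    rw [Gam_add_self, sub_eq_add_neg, ← neg_one_smul ℂ (anni n i)]
  simpa using List.prod_map_mul_self_of_anticomm
    (f := fun i : Fin n => Gam n ⟨n + i.1, by have := i.2; omega⟩)
    (fun i => by
      rw [hX, smul_mul_smul_comm, crea_add_smul_anni_mul_self, Complex.I_mul_I, smul_smul]
      simp)
    (fun i j hij => by
      rw [hX, hX, smul_mul_smul_comm, smul_mul_smul_comm, crea_add_smul_anni_anticomm _ hij,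
        smul_neg])
    (List.nodup_finRange n)

end Gamma

section Conjugation

noncomputable def integralPolyforms (n : ℕ) : Submodule ℤ (Polyform n) :=
  Submodule.span ℤ (Set.range (basisMonomial n))

theorem basisMonomial_mem_integralPolyforms (l : List (Fin n)) :
    basisMonomial n l ∈ integralPolyforms n :=
  Submodule.subset_span ⟨l, rfl⟩

theorem basisMonomial_cons (i : Fin n) (l : List (Fin n)) :
    basisMonomial n (i :: l) = crea n i (basisMonomial n l) := rfl

theorem basisMonomial_append (l l' : List (Fin n)) :
    basisMonomial n (l ++ l') = basisMonomial n l * basisMonomial n l' := by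
  simp only [basisMonomial, List.map_append, List.prod_append]

theorem span_basisMonomial : Submodule.span ℂ (Set.range (basisMonomial n)) = ⊤ := by
  rw [eq_top_iff]
  rintro x -
  induction x using CliffordAlgebra.induction with
  | algebraMap r =>
    rw [Algebra.algebraMap_eq_smul_one]
    exact Submodule.smul_mem _ _ (Submodule.subset_span ⟨[], rfl⟩)
  | ι v =>
    rw [pi_eq_sum_univ' v, map_sum]
    refine Submodule.sum_mem _ fun i _ => ?_
    rw [map_smul]
    exact Submodule.smul_mem _ _ (Submodule.subset_span ⟨[i], List.prod_singleton⟩)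
  | mul a b ha hb =>
    have hab := Submodule.mul_mem_mul ha hb
    rw [Submodule.span_mul_span] at hab
    refine Submodule.span_le.mpr ?_ hab
    rintro _ ⟨_, ⟨l, rfl⟩, _, ⟨l', rfl⟩, rfl⟩
    exact Submodule.subset_span ⟨l ++ l', basisMonomial_append l l'⟩
  | add a b ha hb => exact add_mem ha hb

theorem mem_integralPolyforms_of_basisMonomial {T : Module.End ℂ (Polyform n)}
    (hT : ∀ l, T (basisMonomial n l) ∈ integralPolyforms n) {x : Polyform n}
    (hx : x ∈ integralPolyforms n) : T x ∈ integralPolyforms n :=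
  (Submodule.span_le (p := (integralPolyforms n).comap (T.restrictScalars ℤ)).mpr
    (by rintro _ ⟨l, rfl⟩; exact hT l)) hx

theorem crea_basisMonomial_mem (i : Fin n) (l : List (Fin n)) :
    crea n i (basisMonomial n l) ∈ integralPolyforms n :=
  basisMonomial_mem_integralPolyforms (i :: l)

theorem anni_basisMonomial_mem (i : Fin n) (l : List (Fin n)) :
    anni n i (basisMonomial n l) ∈ integralPolyforms n := by
  induction l with
  | nil =>
    rw [show basisMonomial n [] = 1 from rfl, anni, CliffordAlgebra.contractLeft_one]
    exact zero_mem _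
  | cons j l ih =>
    rw [basisMonomial_cons, anni_crea_apply]
    refine sub_mem ?_ (mem_integralPolyforms_of_basisMonomial (crea_basisMonomial_mem j) ih)
    split_ifs
    · exact basisMonomial_mem_integralPolyforms l
    · exact zero_mem _

variable {st : Polyform n → Polyform n}

namespace IsConjugation

theorem map_zero (hst : IsConjugation n st) : st 0 = 0 :=
  (AddMonoidHom.mk' st hst.1).map_zero

theorem apply_eq_self (hst : IsConjugation n st) {x : Polyform n}
    (hx : x ∈ integralPolyforms n) : st x = x := by
  induction hx using Submodule.span_induction with
  | mem y hy => obtain ⟨l, rfl⟩ := hy; exact hst.2.2 l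
  | zero => exact hst.map_zero
  | add x y _ _ hx hy => rw [hst.1, hx, hy]
  | smul z x _ hx =>
    have hz : st (z • x) = z • st x := (AddMonoidHom.mk' st hst.1).map_zsmul z x
    rw [hz, hx]

theorem apply_apply (hst : IsConjugation n st) (x : Polyform n) : st (st x) = x := by
  have hx : x ∈ Submodule.span ℂ (Set.range (basisMonomial n)) := span_basisMonomial.ge trivial
  induction hx using Submodule.span_induction with
  | mem y hy => obtain ⟨l, rfl⟩ := hy; rw [hst.2.2, hst.2.2]
  | zero => rw [hst.map_zero, hst.map_zero]
  | add x y _ _ hx hy => rw [hst.1, hst.1, hx, hy]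
  | smul z x _ hx => rw [hst.2.1, hst.2.1, hx, Complex.conj_conj]

theorem apply_map (hst : IsConjugation n st) {T : Module.End ℂ (Polyform n)}
    (hT : ∀ l, T (basisMonomial n l) ∈ integralPolyforms n) (x : Polyform n) :
    st (T x) = T (st x) := by
  have hx : x ∈ Submodule.span ℂ (Set.range (basisMonomial n)) := span_basisMonomial.ge trivial
  induction hx using Submodule.span_induction with
  | mem y hy => obtain ⟨l, rfl⟩ := hy; rw [hst.2.2, hst.apply_eq_self (hT l)]
  | zero => rw [LinearMap.map_zero, hst.map_zero, LinearMap.map_zero]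
  | add x y _ _ hx hy => rw [map_add, hst.1, hx, hy, hst.1, map_add]
  | smul z x _ hx => rw [map_smul, hst.2.1, hx, hst.2.1, map_smul]

theorem apply_Gam_castLE (hst : IsConjugation n st) (h : n ≤ 2 * n) (i : Fin n)
    (x : Polyform n) : st (Gam n (Fin.castLE h i) x) = Gam n (Fin.castLE h i) (st x) :=
  Gam_castLE h i ▸ hst.apply_map
    (fun l => add_mem (crea_basisMonomial_mem i l) (anni_basisMonomial_mem i l)) x

theorem apply_Gam_add_self (hst : IsConjugation n st) (i : Fin n) (h : n + i < 2 * n)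
    (x : Polyform n) : st (Gam n ⟨n + i, h⟩ x) = (-1 : ℂ) • Gam n ⟨n + i, h⟩ (st x) := by
  rw [Gam_add_self, LinearMap.smul_apply, hst.2.1, Complex.conj_I,
    hst.apply_map (fun l => sub_mem (crea_basisMonomial_mem i l) (anni_basisMonomial_mem i l)),
    LinearMap.smul_apply, smul_smul, neg_one_mul]

end IsConjugation

end Conjugation

end Polyform

theorem self_add_choose_two (n : ℕ) : n + n.choose 2 = n * (n + 1) / 2 := by
  have h := Nat.choose_two_right (n + 1)
  rw [Nat.choose_succ_succ', Nat.choose_one_right, Nat.add_sub_cancel, mul_comm] at h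
  exact h

theorem Rop_Rop'_sq_general (n : ℕ) (st : Polyform n → Polyform n)
    (hst : IsConjugation n st) (ψ : Polyform n) :
    Rop n st (Rop n st ψ) = ((-1 : ℂ) ^ (n * (n - 1) / 2)) • ψ ∧
    Rop' n st (Rop' n st ψ) = ((-1 : ℂ) ^ (n * (n + 1) / 2)) • ψ := by
  constructor
  · have hcomm := list_prod_apply_eq_pow_smul (c := 1) (l := (List.finRange n).map
      fun i => Gam n (Fin.castLE (by omega) i)) (by
        simpa using fun i x => hst.apply_Gam_castLE (by omega) i x)
    rw [Rop, Rop, hcomm, hst.apply_apply, one_pow, one_smul, ← Module.End.mul_apply,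
      prod_Gam_castLE_mul_self, Module.End.neg_one_pow_apply, Nat.choose_two_right]
  · have hcomm := list_prod_apply_eq_pow_smul (c := -1) (l := (List.finRange n).map
      fun i => Gam n ⟨n + i.1, by have := i.2; omega⟩) (by
        simpa using fun i x => hst.apply_Gam_add_self i (by omega) x)
    rw [Rop', Rop', hcomm, hst.apply_apply, map_smul, ← Module.End.mul_apply,
      prod_Gam_add_self_mul_self, Module.End.neg_one_pow_apply, smul_smul,
      List.length_map, List.length_finRange, ← pow_add, self_add_choose_two]

/-- `R² = (−1)^{n(n−1)/2} id` and `(R')² = (−1)^{n(n+1)/2} id`. -/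
theorem Rop_Rop'_sq (n : ℕ) (hn : 1 ≤ n) (st : Polyform n → Polyform n)
    (hst : IsConjugation n st) (ψ : Polyform n) :
    Rop n st (Rop n st ψ) = ((-1 : ℂ) ^ (n * (n - 1) / 2)) • ψ ∧
    Rop' n st (Rop' n st ψ) = ((-1 : ℂ) ^ (n * (n + 1) / 2)) • ψ :=
  Rop_Rop'_sq_general n st hst ψ
end
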